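/- If (𝒯(t))_{t≥0} on C₀(ℝ,X) satisfies the translation-module property 𝒯(t)(φf) = (T_r(t)φ)(𝒯(t)f) for all φ ∈ C_c(ℝ), then for each t ≥ 0 and s ∈ ℝ the value (𝒯(t)f)(s) depends only on f(s−t): if f, g ∈ C₀(ℝ,X) satisfy f(s−t) = g(s−t), then (𝒯(t)f)(s) = (𝒯(t)g)(s). -/

import Mathlib

open ZeroAtInfty Filter Topology Set

/-- Key lemma: if `h (s - t) = 0` then `(𝒯 t h) s = 0`. -/
theorem aux_local {X : Type*} [NormedAddCommGroup X] [NormedSpace ℝ X]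
    (𝒯 : ℝ → (C₀(ℝ, X) →L[ℝ] C₀(ℝ, X)))
    (hmod : ∀ t : ℝ, 0 ≤ t → ∀ (φ : ℝ → ℝ), Continuous φ → HasCompactSupport φ →
      ∀ f g : C₀(ℝ, X), (∀ s : ℝ, g s = φ s • f s) →
        ∀ s : ℝ, (𝒯 t g) s = φ (s - t) • (𝒯 t f) s)
    (t : ℝ) (ht : 0 ≤ t) (h : C₀(ℝ, X)) (s : ℝ) (hz : h (s - t) = 0) :
    (𝒯 t h) s = 0 := by
  set a := s - t with ha
  rw [← norm_le_zero_iff]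
  refine le_of_forall_pos_le_add (fun ε hε => ?_)
  rw [zero_add]
  set C : ℝ := ‖𝒯 t‖ + 1 with hC
  have hC0 : 0 < C := by positivity
  set ε' : ℝ := ε / C with hε'def
  have hε' : 0 < ε' := div_pos hε hC0
  -- continuity of h at a
  have hcont : ContinuousAt h a := (map_continuous h).continuousAt
  rw [Metric.continuousAt_iff] at hcont
  obtain ⟨δ, hδ, hδball⟩ := hcont ε' hε'
  -- zero at infinity
  have hinf : ∀ᶠ r in cocompact ℝ, ‖h r‖ < ε' := by
    have := (zero_at_infty h : Tendsto h (cocompact ℝ) (𝓝 0))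
    have := this (Metric.ball_mem_nhds 0 hε')
    filter_upwards [this] with r hr
    simpa [dist_eq_norm] using hr
  rw [Filter.hasBasis_cocompact.eventually_iff] at hinf
  obtain ⟨K, hK, hKsub⟩ := hinf
  obtain ⟨R, hR⟩ := hK.isBounded.subset_closedBall 0
  -- the cutoff function
  set φ : ℝ → ℝ := fun r => min 1 (|r - a| / δ) * max 0 (min 1 (R + 1 - |r|)) with hφdef
  have hφcont : Continuous φ := by fun_prop
  have hφsupp : HasCompactSupport φ := by
    refine HasCompactSupport.intro (isCompact_Icc (a := -(R+1)) (b := R+1)) (fun x hx => ?_)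
    have : R + 1 - |x| ≤ 0 := by
      simp only [mem_Icc, not_and_or, not_le] at hx
      rcases hx with hx | hx
      · have : R + 1 < |x| := lt_of_lt_of_le (by linarith) (neg_le_abs x)
        linarith
      · have : R + 1 < |x| := lt_of_lt_of_le hx (le_abs_self x)
        linarith
    simp only [hφdef]
    rw [max_eq_left (by linarith [min_le_right (1:ℝ) (R + 1 - |x|)] : min 1 (R + 1 - |x|) ≤ 0),
      mul_zero]
  have hφ0 : ∀ r, 0 ≤ φ r := fun r =>
    mul_nonneg (le_min zero_le_one (by positivity)) (le_max_left 0 _)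
  have hφ1 : ∀ r, φ r ≤ 1 := fun r =>
    mul_le_one₀ (min_le_left _ _) (le_max_left 0 _)
      (max_le zero_le_one (min_le_left _ _))
  have hφa : φ a = 0 := by simp [hφdef]
  -- φ = 1 on the "good" region
  have hφeq1 : ∀ r, δ ≤ |r - a| → |r| ≤ R → φ r = 1 := by
    intro r h1 h2
    have e1 : min 1 (|r - a| / δ) = 1 := min_eq_left ((one_le_div hδ).mpr h1)
    have e2 : max 0 (min 1 (R + 1 - |r|)) = 1 := by
      rw [min_eq_left (by linarith), max_eq_right zero_le_one]
    simp [hφdef, e1, e2]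
  -- the truncated function k = φ • h
  set k : C₀(ℝ, X) :=
    { toFun := fun r => φ r • h r
      continuous_toFun := hφcont.smul (map_continuous h)
      zero_at_infty' := (hφsupp.smul_right (f' := (h : ℝ → X))).is_zero_at_infty } with hk
  -- norm bound ‖h - k‖ ≤ ε'
  have hnorm : ‖h - k‖ ≤ ε' := by
    rw [← ZeroAtInftyContinuousMap.norm_toBCF_eq_norm]
    refine BoundedContinuousFunction.norm_le hε'.le |>.mpr (fun r => ?_)
    have heval : (h - k).toBCF r = (1 - φ r) • h r := by
      simp [hk, sub_smul, one_smul]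
    rw [heval]
    by_cases hr1 : δ ≤ |r - a| ∧ |r| ≤ R
    · rw [hφeq1 r hr1.1 hr1.2]; simp [hε'.le]
    · have hsmall : ‖h r‖ ≤ ε' := by
        rcases not_and_or.mp hr1 with hr | hr
        · push_neg at hr
          have := hδball (show dist r a < δ by rwa [Real.dist_eq])
          rw [hz] at this
          simpa [dist_eq_norm] using this.le
        · push_neg at hr
          have hrK : r ∉ K := fun hmem => absurd (hR hmem) (by
            simpa [Real.dist_eq, Metric.mem_closedBall] using hr.not_ge)
          exact (hKsub hrK).le
      calc ‖(1 - φ r) • h r‖ = |1 - φ r| * ‖h r‖ := by rw [norm_smul, Real.norm_eq_abs]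
        _ ≤ 1 * ‖h r‖ := by
            refine mul_le_mul_of_nonneg_right ?_ (norm_nonneg _)
            rw [abs_of_nonneg (by linarith [hφ1 r])]
            linarith [hφ0 r]
        _ ≤ ε' := by rwa [one_mul]
  -- applying the module property : (𝒯 t k) s = φ a • (𝒯 t h) s = 0
  have hmk : (𝒯 t k) s = 0 := by
    have := hmod t ht φ hφcont hφsupp h k (fun r => rfl) s
    rw [this, ← ha, hφa, zero_smul]
  -- conclude
  have : ‖(𝒯 t h) s‖ = ‖(𝒯 t (h - k)) s‖ := by
    rw [map_sub]
    have : (𝒯 t (h) - 𝒯 t k) s = (𝒯 t h) s - (𝒯 t k) s := rfl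
    rw [this, hmk, sub_zero]
  rw [this]
  calc ‖(𝒯 t (h - k)) s‖ ≤ ‖𝒯 t (h - k)‖ := by
        rw [← ZeroAtInftyContinuousMap.norm_toBCF_eq_norm]
        exact BoundedContinuousFunction.norm_coe_le_norm ((𝒯 t) (h - k)).toBCF s
    _ ≤ ‖𝒯 t‖ * ‖h - k‖ := (𝒯 t).le_opNorm _
    _ ≤ C * ε' := by
        apply mul_le_mul (by simp [hC]) hnorm (norm_nonneg _) hC0.le
    _ = ε := by rw [hε'def]; field_simp [hC0.ne']

/-- Locality of evolution semigroups: if a `C₀`-semigroup `(𝒯(t))_{t≥0}` on `C₀(ℝ,X)`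
satisfies the translation-module property `𝒯(t)(φ·f) = (T_r(t)φ)·(𝒯(t)f)` for all
compactly supported continuous `φ`, then the value `(𝒯(t)f)(s)` depends only on
`f(s-t)`: if `f(s-t) = g(s-t)` then `(𝒯(t)f)(s) = (𝒯(t)g)(s)`. -/
theorem stmt_18 {X : Type*} [NormedAddCommGroup X] [NormedSpace ℝ X]
    (𝒯 : ℝ → (C₀(ℝ, X) →L[ℝ] C₀(ℝ, X)))
    (hmod : ∀ t : ℝ, 0 ≤ t → ∀ (φ : ℝ → ℝ), Continuous φ → HasCompactSupport φ →
      ∀ f g : C₀(ℝ, X), (∀ s : ℝ, g s = φ s • f s) →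
        ∀ s : ℝ, (𝒯 t g) s = φ (s - t) • (𝒯 t f) s) :
    ∀ t : ℝ, 0 ≤ t → ∀ f g : C₀(ℝ, X), ∀ s : ℝ,
      f (s - t) = g (s - t) → (𝒯 t f) s = (𝒯 t g) s := by
  intro t ht f g s hfg
  have key := aux_local 𝒯 hmod t ht (f - g) s (by simp [hfg])
  have h2 : (𝒯 t (f - g)) s = (𝒯 t f) s - (𝒯 t g) s := by rw [map_sub]; rfl
  rw [h2] at key
  exact sub_eq_zero.mp key
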